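/- For all weights w1, w2, w3 > 0, every step size h > 0 and every λ with 0 < λ ≤ 2, the determinant of Q(h,λ) satisfies det Q(h,λ) ≤ (w3 + w1·h⁴/4) / S(h) < 1. -/

import Mathlib

noncomputable def Sh (w1 w2 w3 h : ℝ) : ℝ := w3 + w2 * h ^ 2 + w1 * h ^ 4 / 4

noncomputable def ah (w1 w2 w3 h : ℝ) : ℝ := w1 * h ^ 2 / (2 * Sh w1 w2 w3 h)

noncomputable def bh (w1 w2 w3 h : ℝ) : ℝ := (w2 * h + w1 * h ^ 3 / 2) / Sh w1 w2 w3 h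

noncomputable def Q (w1 w2 w3 h lam : ℝ) : Matrix (Fin 2) (Fin 2) ℝ :=
  !![1 - h ^ 2 / 2 * ah w1 w2 w3 h * lam, h - h ^ 2 / 2 * bh w1 w2 w3 h;
     -(h * ah w1 w2 w3 h * lam), 1 - h * bh w1 w2 w3 h]

lemma Sh_pos {w1 w2 w3 : ℝ} (h : ℝ) (hw1 : 0 ≤ w1) (hw2 : 0 ≤ w2) (hw3 : 0 < w3) :
    0 < Sh w1 w2 w3 h := by
  unfold Sh
  positivity

lemma det_Q_eq (w1 w2 w3 h lam : ℝ) :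
    (Q w1 w2 w3 h lam).det = 1 - h * bh w1 w2 w3 h + h ^ 2 / 2 * ah w1 w2 w3 h * lam := by
  rw [Q, Matrix.det_fin_two_of]
  ring

lemma det_Q_eq_div {w1 w2 w3 h : ℝ} (lam : ℝ) (hS : Sh w1 w2 w3 h ≠ 0) :
    (Q w1 w2 w3 h lam).det = (w3 + (lam - 1) * w1 * h ^ 4 / 4) / Sh w1 w2 w3 h := by
  rw [det_Q_eq, ah, bh, eq_div_iff hS]
  field_simp
  rw [Sh]
  ring

lemma det_Q_le {w1 w2 w3 h lam : ℝ} (hw1 : 0 ≤ w1) (hS : 0 < Sh w1 w2 w3 h) (hlam : lam ≤ 2) :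
    (Q w1 w2 w3 h lam).det ≤ (w3 + w1 * h ^ 4 / 4) / Sh w1 w2 w3 h := by
  rw [det_Q_eq_div lam hS.ne', div_le_div_iff_of_pos_right hS]
  nlinarith [mul_nonneg hw1 (by positivity : (0:ℝ) ≤ h ^ 4)]

lemma div_Sh_lt_one {w1 w2 w3 h : ℝ} (hw2 : 0 < w2) (hh : h ≠ 0) (hS : 0 < Sh w1 w2 w3 h) :
    (w3 + w1 * h ^ 4 / 4) / Sh w1 w2 w3 h < 1 := by
  rw [div_lt_one hS, Sh]
  nlinarith [mul_pos hw2 (pow_two_pos_of_ne_zero hh)]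

theorem det_Q_lt_one_general (w1 w2 w3 h lam : ℝ) (hw1 : 0 < w1) (hw2 : 0 < w2) (hw3 : 0 < w3)
    (hh : 0 < h) (hlam2 : lam ≤ 2) :
    (Q w1 w2 w3 h lam).det ≤ (w3 + w1 * h ^ 4 / 4) / Sh w1 w2 w3 h ∧
    (w3 + w1 * h ^ 4 / 4) / Sh w1 w2 w3 h < 1 := by
  have hS := Sh_pos h hw1.le hw2.le hw3
  exact ⟨det_Q_le hw1.le hS hlam2, div_Sh_lt_one hw2 hh.ne' hS⟩

theorem det_Q_lt_one (w1 w2 w3 h lam : ℝ) (hw1 : 0 < w1) (hw2 : 0 < w2) (hw3 : 0 < w3)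
    (hh : 0 < h) (hlam0 : 0 < lam) (hlam2 : lam ≤ 2) :
    (Q w1 w2 w3 h lam).det ≤ (w3 + w1 * h ^ 4 / 4) / Sh w1 w2 w3 h ∧
    (w3 + w1 * h ^ 4 / 4) / Sh w1 w2 w3 h < 1 :=
  det_Q_lt_one_general w1 w2 w3 h lam hw1 hw2 hw3 hh hlam2
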